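/- Let a > 0 and M > 0 be real numbers, let h : ℝⁿ → [0, M] be continuous and ℤⁿ-periodic, and let u : ℝⁿ → ℝ be smooth and ℤⁿ-periodic satisfying the differential inequality −Δu(x) ≥ a − e^{u(x)} h(x) for all x ∈ ℝⁿ. Then u(x) ≥ log(a/M) for all x. -/
import Mathlib

open Finset
open scoped ContDiff

lemma second_deriv_nonneg_of_min {g : ℝ → ℝ} (hg : ContDiff ℝ (⊤ : ℕ∞) g)
    (hmin : ∀ t, g 0 ≤ g t) : 0 ≤ deriv (deriv g) 0 := by
  by_contra hlt
  push_neg at hlt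
  have hg' : ContDiff ℝ (∞ : WithTop ℕ∞) g := hg.of_le (by simp)
  have hg1 : ContDiff ℝ (∞ : WithTop ℕ∞) (deriv g) := (contDiff_infty_iff_deriv.mp hg').2
  have hg2cont : Continuous (deriv (deriv g)) := (contDiff_infty_iff_deriv.mp hg1).2.continuous
  have hd0 : deriv g 0 = 0 :=
    (IsLocalMin.deriv_eq_zero (Filter.Eventually.of_forall hmin))
  -- find ε with deriv (deriv g) < 0 on ball
  obtain ⟨ε, hε, hball⟩ := Metric.eventually_nhds_iff.mp
    (hg2cont.continuousAt.eventually_lt continuousAt_const hlt)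
  set c : ℝ := -ε/2 with hc
  have hcneg : c < 0 := by rw [hc]; linarith
  have hanti : StrictAntiOn (deriv g) (Set.Icc c 0) := by
    apply strictAntiOn_of_deriv_neg (convex_Icc c 0) (hg1.continuous.continuousOn)
    intro t ht
    rw [interior_Icc] at ht
    apply hball
    rw [Real.dist_eq, abs_lt]
    constructor <;> simp at ht ⊢ <;> nlinarith [ht.1, ht.2]
  have hmono : StrictMonoOn g (Set.Icc c 0) := by
    apply strictMonoOn_of_deriv_pos (convex_Icc c 0) hg.continuous.continuousOn
    intro t ht
    rw [interior_Icc] at ht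
    have := hanti (Set.mem_Icc.mpr ⟨le_of_lt ht.1, le_of_lt ht.2⟩)
      (Set.mem_Icc.mpr ⟨le_of_lt hcneg, le_refl 0⟩) ht.2
    linarith [hd0 ▸ this]
  have := hmono (Set.mem_Icc.mpr ⟨le_refl c, hcneg.le⟩)
    (Set.mem_Icc.mpr ⟨hcneg.le, le_refl 0⟩) hcneg
  linarith [hmin c]
/-- Lower bound in the Kazdan–Warner lemma: if `h : ℝⁿ → [0,M]` is continuous and
ℤⁿ-periodic, `u` is smooth, ℤⁿ-periodic, and `−Δu ≥ a − e^u h` with `a > 0`, then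
`u ≥ log(a/M)`. -/
theorem stmt12 (n : ℕ) (a M : ℝ) (ha : 0 < a) (hM : 0 < M)
    (h u : (Fin n → ℝ) → ℝ)
    (hcont : Continuous h)
    (hrange : ∀ x, 0 ≤ h x ∧ h x ≤ M)
    (hper : ∀ (x : Fin n → ℝ) (k : Fin n → ℤ), h (x + fun i => (k i : ℝ)) = h x)
    (husmooth : ContDiff ℝ (⊤ : ℕ∞) u)
    (huper : ∀ (x : Fin n → ℝ) (k : Fin n → ℤ), u (x + fun i => (k i : ℝ)) = u x)
    (hineq : ∀ x : Fin n → ℝ,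
      a - Real.exp (u x) * h x ≤
        -(∑ i, iteratedDeriv 2 (fun t : ℝ => u (x + t • (Pi.single i 1 : Fin n → ℝ))) 0)) :
    ∀ x, Real.log (a / M) ≤ u x := by
  obtain ⟨x₀, hx₀mem, hx₀min⟩ := (isCompact_Icc (a := (0 : Fin n → ℝ)) (b := 1)).exists_isMinOn
    ⟨0, Set.mem_Icc.mpr ⟨le_refl _, fun i => by norm_num⟩⟩ husmooth.continuous.continuousOn
  have hglobal : ∀ y, u x₀ ≤ u y := by
    intro y
    have hy : u y = u (fun i => Int.fract (y i)) := by
      rw [← huper (fun i => Int.fract (y i)) (fun i => ⌊y i⌋)]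
      congr 1; funext i; simp only [Pi.add_apply]; rw [Int.fract]; ring
    rw [hy]
    exact hx₀min (Set.mem_Icc.mpr ⟨fun i => Int.fract_nonneg _, fun i => (Int.fract_lt_one _).le⟩)
  have hsum : 0 ≤ ∑ i, iteratedDeriv 2 (fun t : ℝ => u (x₀ + t • (Pi.single i 1 : Fin n → ℝ))) 0 := by
    apply Finset.sum_nonneg
    intro i _
    set g : ℝ → ℝ := fun t => u (x₀ + t • (Pi.single i 1 : Fin n → ℝ)) with hgdef
    have hgc : ContDiff ℝ (⊤ : ℕ∞) g :=
      husmooth.comp (contDiff_const.add (contDiff_id.smul contDiff_const))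
    have hmin : ∀ t, g 0 ≤ g t := by
      intro t
      have : g 0 = u x₀ := by simp [hgdef]
      rw [this]; exact hglobal _
    have h2eq : iteratedDeriv 2 g 0 = deriv (deriv g) 0 := by
      rw [show (2:ℕ) = 1+1 from rfl, iteratedDeriv_succ, iteratedDeriv_one]
    rw [h2eq]
    exact second_deriv_nonneg_of_min hgc hmin
  have key := hineq x₀
  have h1 : a ≤ Real.exp (u x₀) * h x₀ := by linarith
  have h2 : a ≤ Real.exp (u x₀) * M :=
    le_trans h1 (mul_le_mul_of_nonneg_left (hrange x₀).2 (Real.exp_pos _).le)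
  have h3 : a / M ≤ Real.exp (u x₀) := (div_le_iff₀ hM).mpr h2
  intro x
  calc Real.log (a / M) ≤ u x₀ := by
        rw [← Real.log_exp (u x₀)]
        exact Real.log_le_log (by positivity) h3
    _ ≤ u x := hglobal x
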